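/- Let γ_0 : (t_0, ∞) → ℂ be an admissible curve, let t_1 > t_0, and let γ := γ_0|_{(t_1, ∞)} be its restriction. Then for every a ∉ γ_0([t_1, ∞)) one has α(γ, a) ≤ α(γ', 0) + 1/2. -/

import Mathlib

open Filter Topology Set MeasureTheory
open scoped ENNReal Real

/-- The variation number `α(γ|_{(t₀,∞)}, a)` of a curve `γ` around `a`. -/
noncomputable def variation (γ : ℝ → ℂ) (t0 : ℝ) (a : ℂ) : ℝ≥0∞ :=
  ENNReal.ofReal (1 / (2 * Real.pi)) *
    ∫⁻ t in Set.Ioi t0, ENNReal.ofReal |(deriv γ t / (γ t - a)).im|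

/-- An admissible curve on `(t₀, ∞)`: injective, `C²`, nonvanishing derivative, and with
`|γ(t)| = t + O(1)`, `|γ'(t)| = 1 + O(1/t)`, `|γ''(t)| = O(1/t²)` as `t → ∞`. -/
def Admissible (t0 : ℝ) (γ : ℝ → ℂ) : Prop :=
  Set.InjOn γ (Set.Ioi t0) ∧ ContDiffOn ℝ 2 γ (Set.Ioi t0) ∧
  (∀ t ∈ Set.Ioi t0, deriv γ t ≠ 0) ∧
  (∃ c : ℝ, ∀ᶠ t in Filter.atTop, |‖γ t‖ - t| ≤ c) ∧
  (∃ c : ℝ, ∀ᶠ t in Filter.atTop, |‖deriv γ t‖ - 1| ≤ c / t) ∧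
  (∃ c : ℝ, ∀ᶠ t in Filter.atTop, ‖deriv (deriv γ) t‖ ≤ c / t ^ 2)

/-!
Write `w = γ' / (γ - a)`. Then `w' / w = γ'' / γ' - w`, so `w = exp L` with `L' = γ'' / γ' - w`.
With `u = Im w = e^{Re L} sin (Im L)` and `v = Im (γ'' / γ')`, the angle `ψ = Im L` satisfies
`ψ' = v - u`. Along `ψ`, the triangle wave `arccos (cos ψ) ∈ [0, π]` has derivative
`sgn (sin ψ) (v - u) = sgn (sin ψ) v - |u|`, so `∫ |u| ≤ ∫ |v| + π` on every compact interval;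
exhausting `(t₁, ∞)` and dividing by `2π` gives the claim. Since `arccos ∘ cos` is not
differentiable, one works with `arccos (k cos ψ)` for `k < 1` and lets `k → 1`.
-/

section

open Real

noncomputable def smoothedSign (k x : ℝ) : ℝ := k * sin x / √(1 - (k * cos x) ^ 2)

theorem hasDerivAt_arccos_mul_cos {k : ℝ} (hk : |k| < 1) (x : ℝ) :
    HasDerivAt (fun x => arccos (k * cos x)) (smoothedSign k x) x := by
  have hkc : |k * cos x| < 1 := by
    rw [abs_mul]
    exact lt_of_le_of_lt (mul_le_of_le_one_right (abs_nonneg k) (abs_cos_le_one x)) hk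
  refine ((hasDerivAt_arccos (abs_lt.1 hkc).1.ne' (abs_lt.1 hkc).2.ne).comp x
    ((hasDerivAt_cos x).const_mul k)).congr_deriv ?_
  rw [smoothedSign]
  ring

theorem abs_smoothedSign_le_one {k : ℝ} (hk : |k| ≤ 1) (x : ℝ) : |smoothedSign k x| ≤ 1 := by
  rw [smoothedSign, abs_div, abs_of_nonneg (sqrt_nonneg _)]
  refine div_le_one_of_le₀ (Real.abs_le_sqrt ?_) (sqrt_nonneg _)
  have hk2 : k ^ 2 ≤ 1 := by nlinarith [abs_nonneg k, sq_abs k]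
  nlinarith [sin_sq_add_cos_sq x, sq_nonneg (cos x)]

theorem abs_sin_sub_le_smoothedSign_mul_sin {k : ℝ} (hk0 : 0 < k) (hk1 : k < 1) (x : ℝ) :
    |sin x| - √(1 - k ^ 2) / k ≤ smoothedSign k x * sin x := by
  set s := |sin x|
  set d := √(1 - k ^ 2)
  have hd : 0 < d := sqrt_pos.2 (by nlinarith)
  have hD : 1 - (k * cos x) ^ 2 = d ^ 2 + (k * s) ^ 2 := by
    rw [sq_sqrt (by nlinarith), mul_pow, mul_pow, sq_abs]
    nlinarith [sin_sq_add_cos_sq x]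
  have hDpos : 0 < √(1 - (k * cos x) ^ 2) := sqrt_pos.2 (by rw [hD]; positivity)
  have hDle : √(1 - (k * cos x) ^ 2) ≤ d + k * s := by
    rw [hD]
    exact sqrt_le_iff.2
      ⟨by positivity, by nlinarith [mul_nonneg (mul_nonneg hd.le hk0.le) (abs_nonneg (sin x))]⟩
  have hlhs : smoothedSign k x * sin x = k * s ^ 2 / √(1 - (k * cos x) ^ 2) := by
    rw [smoothedSign, sq_abs]; ring
  rw [hlhs, le_div_iff₀ hDpos]
  have hs : 0 ≤ s := abs_nonneg _
  rcases le_or_gt (s - d / k) 0 with h | h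
  · nlinarith [mul_nonpos_of_nonpos_of_nonneg h hDpos.le, sq_nonneg s]
  · calc (s - d / k) * √(1 - (k * cos x) ^ 2) ≤ (s - d / k) * (d + k * s) :=
          mul_le_mul_of_nonneg_left hDle h.le
      _ = k * s ^ 2 - d ^ 2 / k := by field_simp; ring
      _ ≤ k * s ^ 2 := by linarith [show 0 ≤ d ^ 2 / k by positivity]

theorem smoothedSign_mul_sub_le {k : ℝ} (hk0 : 0 < k) (hk1 : k < 1) {u v ρ ψ : ℝ}
    (hu : u = exp ρ * sin ψ) :
    smoothedSign k ψ * (v - u) ≤ |v| + √(1 - k ^ 2) / k * exp ρ - |u| := by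
  have hsv : smoothedSign k ψ * v ≤ |v| :=
    calc smoothedSign k ψ * v ≤ |smoothedSign k ψ| * |v| := by rw [← abs_mul]; exact le_abs_self _
      _ ≤ |v| := mul_le_of_le_one_left (abs_nonneg _)
          (abs_smoothedSign_le_one (abs_le.2 ⟨by linarith, hk1.le⟩) _)
  have hsu := mul_le_mul_of_nonneg_left (abs_sin_sub_le_smoothedSign_mul_sin hk0 hk1 ψ)
    (exp_pos ρ).le
  rw [hu, abs_mul, abs_of_pos (exp_pos _)]
  linarith

variable {u v ρ ψ : ℝ → ℝ} {c T : ℝ}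

theorem integral_abs_le_integral_abs_add_pi_add_mul_integral_exp (hcT : c ≤ T) {k : ℝ}
    (hk0 : 0 < k) (hk1 : k < 1) (hu : ∀ t ∈ Icc c T, u t = exp (ρ t) * sin (ψ t))
    (hψ : ∀ t ∈ Icc c T, HasDerivAt ψ (v t - u t) t)
    (hv : ContinuousOn v (Icc c T)) (hρ : ContinuousOn ρ (Icc c T)) :
    ∫ t in c..T, |u t| ≤
      (∫ t in c..T, |v t|) + π + √(1 - k ^ 2) / k * ∫ t in c..T, exp (ρ t) := by
  set δ := √(1 - k ^ 2) / k
  have hψc : ContinuousOn ψ (Icc c T) := fun t ht => (hψ t ht).continuousAt.continuousWithinAt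
  have hexpc : ContinuousOn (fun t => exp (ρ t)) (Icc c T) := continuous_exp.comp_continuousOn hρ
  have huc : ContinuousOn u (Icc c T) :=
    (hexpc.mul (continuous_sin.comp_continuousOn hψc)).congr hu
  have hG : ∀ t ∈ Icc c T, HasDerivAt (fun s => arccos (k * cos (ψ s)))
      (smoothedSign k (ψ t) * (v t - u t)) t := fun t ht =>
    (hasDerivAt_arccos_mul_cos (abs_lt.2 ⟨by linarith, hk1⟩) (ψ t)).comp t (hψ t ht)
  have hvc : ContinuousOn (fun t => |v t|) (Icc c T) := hv.abs
  have hec : ContinuousOn (fun t => δ * exp (ρ t)) (Icc c T) := continuousOn_const.mul hexpc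
  have hvi := hvc.intervalIntegrable_of_Icc (μ := volume) hcT
  have hei := hec.intervalIntegrable_of_Icc (μ := volume) hcT
  have hui := huc.abs.intervalIntegrable_of_Icc (μ := volume) hcT
  have hftc := intervalIntegral.sub_le_integral_of_hasDeriv_right_of_le
    (φ := fun t => |v t| + δ * exp (ρ t) - |u t|) hcT
    (fun t ht => (hG t ht).continuousAt.continuousWithinAt)
    (fun t ht => (hG t (Ioo_subset_Icc_self ht)).hasDerivWithinAt)
    ((hvc.add hec).sub huc.abs).integrableOn_Icc
    (fun t ht => smoothedSign_mul_sub_le hk0 hk1 (hu t (Ioo_subset_Icc_self ht)))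
  rw [intervalIntegral.integral_sub (hvi.add hei) hui, intervalIntegral.integral_add hvi hei,
    intervalIntegral.integral_const_mul] at hftc
  linarith [arccos_nonneg (k * cos (ψ T)), arccos_le_pi (k * cos (ψ c))]

theorem integral_abs_le_integral_abs_add_pi (hcT : c ≤ T)
    (hu : ∀ t ∈ Icc c T, u t = exp (ρ t) * sin (ψ t))
    (hψ : ∀ t ∈ Icc c T, HasDerivAt ψ (v t - u t) t)
    (hv : ContinuousOn v (Icc c T)) (hρ : ContinuousOn ρ (Icc c T)) :
    ∫ t in c..T, |u t| ≤ (∫ t in c..T, |v t|) + π := by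
  have hcont : ContinuousAt (fun k : ℝ =>
      (∫ t in c..T, |v t|) + π + √(1 - k ^ 2) / k * ∫ t in c..T, exp (ρ t)) 1 := by
    fun_prop (disch := norm_num)
  refine ge_of_tendsto
    (by simpa using hcont.tendsto.mono_left (nhdsWithin_le_nhds (s := Iio 1))) ?_
  filter_upwards [Ioo_mem_nhdsLT (show (0 : ℝ) < 1 by norm_num)] with k hk
  exact integral_abs_le_integral_abs_add_pi_add_mul_integral_exp hcT hk.1 hk.2 hu hψ hv hρ

theorem exists_hasDerivAt_cexp_eq {U : Set ℝ} (hU : IsOpen U) (hU' : IsPreconnected U)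
    {w q : ℝ → ℂ} (hw : ∀ t ∈ U, HasDerivAt w (q t * w t) t) (hq : ContinuousOn q U)
    {c : ℝ} (hc : c ∈ U) (hwc : w c ≠ 0) :
    ∃ L : ℝ → ℂ, ∀ t ∈ U, HasDerivAt L (q t) t ∧ Complex.exp (L t) = w t := by
  set L : ℝ → ℂ := fun t => Complex.log (w c) + ∫ s in c..t, q s
  have hL : ∀ t ∈ U, HasDerivAt L (q t) t := fun t ht =>
    (intervalIntegral.integral_hasDerivAt_right
      ((hq.mono (hU'.ordConnected.uIcc_subset hc ht)).intervalIntegrable)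
      (hq.stronglyMeasurableAtFilter hU t ht) (hq.continuousAt (hU.mem_nhds ht))).const_add _
  have hF : ∀ t ∈ U, HasDerivAt (fun s => w s * Complex.exp (-L s)) 0 t := by
    intro t ht
    refine ((hw t ht).mul (hL t ht).neg.cexp).congr_deriv ?_
    ring
  refine ⟨L, fun t ht => ⟨hL t ht, ?_⟩⟩
  have hconst := hU.is_const_of_deriv_eq_zero hU'
    (fun s hs => (hF s hs).differentiableAt.differentiableWithinAt) (fun s hs => (hF s hs).deriv)
    ht hc
  simp only [L, intervalIntegral.integral_same, add_zero, Complex.exp_neg, Complex.exp_log hwc,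
    mul_inv_cancel₀ hwc, mul_inv_eq_one₀ (Complex.exp_ne_zero _)] at hconst
  exact hconst.symm

theorem hasDerivAt_div_sub_const {f g : ℝ → ℂ} {g' a : ℂ} {t : ℝ} (hf : HasDerivAt f (g t) t)
    (hg : HasDerivAt g g' t) (hg0 : g t ≠ 0) (hfa : f t ≠ a) :
    HasDerivAt (fun s => g s / (f s - a))
      ((g' / g t - g t / (f t - a)) * (g t / (f t - a))) t := by
  have hfa' : f t - a ≠ 0 := sub_ne_zero.2 hfa
  refine (hg.div (hf.sub_const a) hfa').congr_deriv ?_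
  field_simp

theorem ofReal_intervalIntegral_abs_eq {f : ℝ → ℝ} {c T : ℝ} (hcT : c ≤ T)
    (hf : ContinuousOn f (Icc c T)) :
    ENNReal.ofReal (∫ t in c..T, |f t|) = ∫⁻ t in Icc c T, ENNReal.ofReal |f t| := by
  rw [intervalIntegral.integral_of_le hcT, ← integral_Icc_eq_integral_Ioc,
    ofReal_integral_eq_lintegral_ofReal hf.abs.integrableOn_Icc
      (ae_of_all _ fun t => abs_nonneg _)]

theorem setLIntegral_abs_im_deriv_div_sub_le {U : Set ℝ} (hU : IsOpen U)
    (hU' : IsPreconnected U) {γ : ℝ → ℂ} (hγ : ContDiffOn ℝ 2 γ U)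
    (hγ' : ∀ t ∈ U, deriv γ t ≠ 0) {a : ℂ} (ha : ∀ t ∈ U, γ t ≠ a) {c T : ℝ} (hcT : c ≤ T) (hcTU : Icc c T ⊆ U) :
    ∫⁻ t in Icc c T, ENNReal.ofReal |(deriv γ t / (γ t - a)).im| ≤
      (∫⁻ t in Icc c T, ENNReal.ofReal |(deriv (deriv γ) t / deriv γ t).im|) +
        ENNReal.ofReal π := by
  have hγ₁ : ContDiffOn ℝ 1 (deriv γ) U := hγ.deriv_of_isOpen hU (by norm_num)
  have hd₁ : ∀ t ∈ U, HasDerivAt γ (deriv γ t) t := fun t ht =>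
    ((hγ.differentiableOn (by norm_num) t ht).differentiableAt (hU.mem_nhds ht)).hasDerivAt
  have hd₂ : ∀ t ∈ U, HasDerivAt (deriv γ) (deriv (deriv γ) t) t := fun t ht =>
    ((hγ₁.differentiableOn one_ne_zero t ht).differentiableAt (hU.mem_nhds ht)).hasDerivAt
  set w : ℝ → ℂ := fun t => deriv γ t / (γ t - a)
  set v : ℝ → ℂ := fun t => deriv (deriv γ) t / deriv γ t
  have hv : ContinuousOn v U :=
    (hγ₁.continuousOn_deriv_of_isOpen hU le_rfl).div hγ₁.continuousOn hγ'
  have hw : ContinuousOn w U := hγ₁.continuousOn.div (hγ.continuousOn.sub continuousOn_const)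
    fun t ht => sub_ne_zero.2 (ha t ht)
  have hc : c ∈ U := hcTU ⟨le_rfl, hcT⟩
  obtain ⟨L, hL⟩ := exists_hasDerivAt_cexp_eq hU hU'
    (fun t ht => hasDerivAt_div_sub_const (hd₁ t ht) (hd₂ t ht) (hγ' t ht) (ha t ht))
    (hv.sub hw) hc (div_ne_zero (hγ' c hc) (sub_ne_zero.2 (ha c hc)))
  have hwc : ContinuousOn (fun t => (w t).im) (Icc c T) :=
    (Complex.continuous_im.comp_continuousOn hw).mono hcTU
  have hvc : ContinuousOn (fun t => (v t).im) (Icc c T) :=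
    (Complex.continuous_im.comp_continuousOn hv).mono hcTU
  have hreal := integral_abs_le_integral_abs_add_pi (u := fun t => (w t).im)
    (v := fun t => (v t).im) (ρ := fun t => (L t).re) (ψ := fun t => (L t).im) hcT
    (fun t ht => (congrArg Complex.im (hL t (hcTU ht)).2.symm).trans (Complex.exp_im _))
    (fun t ht => (Complex.imCLM.hasFDerivAt.comp_hasDerivAt t (hL t (hcTU ht)).1).congr_deriv
      (Complex.sub_im _ _))
    hvc (fun t ht => (Complex.continuous_re.continuousAt.comp
      (hL t (hcTU ht)).1.continuousAt).continuousWithinAt)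
  calc _ = ENNReal.ofReal (∫ t in c..T, |(w t).im|) :=
        (ofReal_intervalIntegral_abs_eq hcT hwc).symm
    _ ≤ ENNReal.ofReal ((∫ t in c..T, |(v t).im|) + π) := ENNReal.ofReal_le_ofReal hreal
    _ = _ := by
      rw [ENNReal.ofReal_add (intervalIntegral.integral_nonneg hcT fun t _ => abs_nonneg _)
        pi_pos.le, ofReal_intervalIntegral_abs_eq hcT hvc]

theorem setLIntegral_Ioi_le_of_forall_Icc_le {f : ℝ → ℝ≥0∞} {t₁ : ℝ} {B : ℝ≥0∞}
    (h : ∀ c T, t₁ < c → c ≤ T → ∫⁻ t in Icc c T, f t ≤ B) : ∫⁻ t in Ioi t₁, f t ≤ B := by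
  have hcover : ⋃ p : {p : ℚ × ℚ // t₁ < p.1}, Icc (p.1.1 : ℝ) p.1.2 = Ioi t₁ := by
    ext x
    simp only [mem_iUnion, mem_Icc, mem_Ioi]
    constructor
    · rintro ⟨p, hp, -⟩
      exact p.2.trans_le hp
    · intro hx
      obtain ⟨c, hc₁, hc₂⟩ := exists_rat_btwn hx
      obtain ⟨T, hT⟩ := exists_rat_gt x
      exact ⟨⟨(c, T), hc₁⟩, hc₂.le, hT.le⟩
  have hdir : Directed (· ⊆ ·) fun p : {p : ℚ × ℚ // t₁ < p.1} => Icc (p.1.1 : ℝ) p.1.2 := by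
    rintro ⟨⟨c, T⟩, hc⟩ ⟨⟨c', T'⟩, hc'⟩
    refine ⟨⟨(min c c', max T T'), ?_⟩, Icc_subset_Icc ?_ ?_, Icc_subset_Icc ?_ ?_⟩ <;>
      simp_all
  rw [← hcover, setLIntegral_iUnion_of_directed _ hdir]
  refine iSup_le fun p => ?_
  rcases le_or_gt (p.1.1 : ℝ) p.1.2 with hle | hlt
  · exact h _ _ p.2 hle
  · simp [Icc_eq_empty_of_lt hlt]

end

/-- **Variation Numbers of a Curve and its Derivative.**
Let `γ₀` be an admissible curve on `(t₀, ∞)` and `γ` its restriction to `(t₁, ∞)` for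
some `t₁ > t₀`. Then for every `a ∉ γ₀([t₁, ∞))`,
`α(γ, a) ≤ α(γ', 0) + 1/2`. -/
theorem variation_number_curve_and_derivative (t0 t1 : ℝ) (γ : ℝ → ℂ)
    (h : Admissible t0 γ) (h01 : t0 < t1) (a : ℂ) (ha : a ∉ γ '' Set.Ici t1) :
    variation γ t1 a ≤ variation (deriv γ) t1 0 + ENNReal.ofReal (1 / 2) := by
  obtain ⟨-, hγ, hγ', -⟩ := h
  have hU : Ioi t1 ⊆ Ioi t0 := Ioi_subset_Ioi h01.le
  have hbound : ∫⁻ t in Ioi t1, ENNReal.ofReal |(deriv γ t / (γ t - a)).im| ≤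
      (∫⁻ t in Ioi t1, ENNReal.ofReal |(deriv (deriv γ) t / deriv γ t).im|) + ENNReal.ofReal π := by
    refine setLIntegral_Ioi_le_of_forall_Icc_le fun c T hc hcT => ?_
    have hcTU : Icc c T ⊆ Ioi t1 := fun t ht => hc.trans_le ht.1
    calc _ ≤ _ := setLIntegral_abs_im_deriv_div_sub_le isOpen_Ioi isPreconnected_Ioi (hγ.mono hU)
          (fun t ht => hγ' t (hU ht)) (fun t ht hγa => ha ⟨t, mem_Ici.2 ht.le, hγa⟩) hcT hcTU
      _ ≤ _ := by gcongr
  unfold variation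
  simp only [sub_zero]
  calc _ ≤ ENNReal.ofReal (1 / (2 * π)) * ((∫⁻ t in Ioi t1,
        ENNReal.ofReal |(deriv (deriv γ) t / deriv γ t).im|) + ENNReal.ofReal π) := by gcongr
    _ = _ := by
      rw [mul_add, ← ENNReal.ofReal_mul (by positivity)]
      field_simp
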